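/- arXiv:2007.10010 — 3 statements merged into one kernel-verified Lean document; each statement's English description precedes it below -/
import Mathlib

section
/- Squeezing function of the punctured disk: for the punctured unit disk A_0 = 𝔻 \ {0} and any z ∈ A_0, S_{A_0}(z) = |z|. -/
open Metric Set

noncomputable def squeezingFun1 (Ω : Set ℂ) (z : ℂ) : ℝ :=
  sSup {t : ℝ | ∃ (f : ℂ → ℂ) (a b : ℝ), 0 < a ∧ 0 < b ∧
    DifferentiableOn ℂ f Ω ∧ Set.InjOn f Ω ∧ f z = 0 ∧
    ball (0 : ℂ) a ⊆ f '' Ω ∧ f '' Ω ⊆ ball (0 : ℂ) b ∧ t = a / b}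

/-! The Möbius involution `φ_z w = (z - w) / (1 - z̄ w)` of `𝔻` maps `𝔻 \ {0}` onto `𝔻 \ {z}`,
which contains `D(0; |z|)`; this gives `S(z) ≥ |z|`.

Conversely, let `f` be admissible with `D(0; a) ⊆ f(𝔻 \ {0}) ⊆ D(0; b)`. The bounded map
`f ∘ φ_z` on `𝔻 \ {z}` extends holomorphically to some `H` on `𝔻`, and by the open mapping
theorem `H` is still injective, so `H z` is a value omitted by `f` and `a ≤ |H z|`. Since
`H 0 = f z = 0` and `|H| ≤ b`, Schwarz's lemma gives `|H z| ≤ b |z|`. -/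

open Complex ComplexConjugate Filter Function Topology

noncomputable def diskMobius (z w : ℂ) : ℂ := (z - w) / (1 - conj z * w)

section DiskMobius

variable {z w : ℂ}

theorem one_sub_conj_mul_ne_zero (hz : ‖z‖ < 1) (hw : ‖w‖ < 1) : 1 - conj z * w ≠ 0 := by
  have hlt : ‖conj z * w‖ < 1 := by
    rw [norm_mul, norm_conj]
    exact mul_lt_one_of_nonneg_of_lt_one_left (norm_nonneg z) hz hw.le
  intro h
  rw [← sub_eq_zero.mp h, norm_one] at hlt
  exact lt_irrefl 1 hlt

theorem normSq_one_sub_conj_mul_sub_normSq_sub (z w : ℂ) :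
    normSq (1 - conj z * w) - normSq (z - w) = (1 - normSq z) * (1 - normSq w) := by
  simp only [normSq_apply, sub_re, sub_im, mul_re, mul_im, conj_re, conj_im, one_re, one_im]
  ring

theorem norm_diskMobius_lt_one (hz : ‖z‖ < 1) (hw : ‖w‖ < 1) : ‖diskMobius z w‖ < 1 := by
  have hnormSq {u : ℂ} (hu : ‖u‖ < 1) : 0 < 1 - normSq u := by
    rw [sub_pos, ← Complex.sq_norm]
    exact pow_lt_one₀ (norm_nonneg u) hu two_ne_zero
  rw [diskMobius, norm_div, div_lt_one (norm_pos_iff.2 (one_sub_conj_mul_ne_zero hz hw)),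
    ← sq_lt_sq₀ (norm_nonneg _) (norm_nonneg _), Complex.sq_norm, Complex.sq_norm, ← sub_pos,
    normSq_one_sub_conj_mul_sub_normSq_sub]
  exact mul_pos (hnormSq hz) (hnormSq hw)

theorem diskMobius_diskMobius (hz : ‖z‖ < 1) (hw : ‖w‖ < 1) :
    diskMobius z (diskMobius z w) = w := by
  have h₁ : 1 - w * conj z ≠ 0 := mul_comm (conj z) w ▸ one_sub_conj_mul_ne_zero hz hw
  have h₂ := one_sub_conj_mul_ne_zero hz (norm_diskMobius_lt_one hz hw)
  rw [diskMobius] at h₂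
  rw [diskMobius, diskMobius, div_eq_iff h₂]
  field_simp
  ring

@[simp]
theorem diskMobius_self (z : ℂ) : diskMobius z z = 0 := by simp [diskMobius]

@[simp]
theorem diskMobius_zero (z : ℂ) : diskMobius z 0 = z := by simp [diskMobius]

theorem differentiableOn_diskMobius (hz : ‖z‖ < 1) :
    DifferentiableOn ℂ (diskMobius z) (ball 0 1) :=
  ((differentiable_const z).sub differentiable_id).differentiableOn.div
    ((differentiable_const 1).sub ((differentiable_const _).mul differentiable_id)).differentiableOn
    fun _ hw ↦ one_sub_conj_mul_ne_zero hz (mem_ball_zero_iff.1 hw)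

theorem bijOn_diskMobius (hz : ‖z‖ < 1) : BijOn (diskMobius z) (ball 0 1) (ball 0 1) := by
  have hmaps : MapsTo (diskMobius z) (ball 0 1) (ball 0 1) := fun _ hw ↦
    mem_ball_zero_iff.2 (norm_diskMobius_lt_one hz (mem_ball_zero_iff.1 hw))
  have hinv : LeftInvOn (diskMobius z) (diskMobius z) (ball 0 1) := fun _ hw ↦
    diskMobius_diskMobius hz (mem_ball_zero_iff.1 hw)
  exact InvOn.bijOn ⟨hinv, hinv⟩ hmaps hmaps

theorem image_diskMobius_ball_diff_singleton (hz : ‖z‖ < 1) (hw : w ∈ ball (0 : ℂ) 1) :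
    diskMobius z '' (ball 0 1 \ {w}) = ball 0 1 \ {diskMobius z w} := by
  rw [(bijOn_diskMobius hz).injOn.image_sdiff, (bijOn_diskMobius hz).image_eq,
    inter_singleton_of_mem hw, image_singleton]

end DiskMobius

theorem ContinuousAt.mapsTo_of_mapsTo_diff_singleton {X Y : Type*} [TopologicalSpace X]
    [TopologicalSpace Y] {f : X → Y} {U : Set X} {s : Set Y} {c : X} [(𝓝[≠] c).NeBot]
    (hf : ContinuousAt f c) (hU : U ∈ 𝓝 c) (hs : IsClosed s) (h : MapsTo f (U \ {c}) s) :
    MapsTo f U s := by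
  intro x hx
  rcases eq_or_ne x c with rfl | hxc
  · exact hs.mem_of_tendsto (hf.tendsto.mono_left nhdsWithin_le_nhds)
      (mem_of_superset (sdiff_mem_nhdsWithin_compl hU _) h)
  · exact h ⟨hx, hxc⟩

theorem DifferentiableOn.injOn_of_injOn_diff_singleton {H : ℂ → ℂ} {U : Set ℂ} {c : ℂ}
    (hH : DifferentiableOn ℂ H U) (hU : IsOpen U) (hUc : IsPreconnected U) (hc : c ∈ U)
    (hinj : InjOn H (U \ {c})) : InjOn H U := by
  obtain ⟨w, hw⟩ | hopen := (hH.analyticOnNhd hU).is_constant_or_isOpen hUc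
  · obtain ⟨x, hx, y, hy, hxy⟩ :=
      ((infinite_of_mem_nhds c (hU.mem_nhds hc)).sdiff (finite_singleton c)).nontrivial
    exact absurd (hinj hx hy ((hw x hx.1).trans (hw y hy.1).symm)) hxy
  -- If `H y = H c`, the images of disjoint neighbourhoods of `c` and `y` are neighbourhoods
  -- of `H c`, so they share a value other than `H c`, taken at two distinct points of `U \ {c}`.
  have hne : ∀ y ∈ U \ {c}, H y ≠ H c := by
    rintro y ⟨hyU, hyc⟩ hyeq
    obtain ⟨V, W, hV, hW, hcV, hyW, hVW⟩ := t2_separation (Ne.symm hyc)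
    have hnhds : H '' (V ∩ U) ∩ H '' (W ∩ U) ∈ 𝓝 (H c) :=
      inter_mem ((hopen _ inter_subset_right (hV.inter hU)).mem_nhds ⟨c, ⟨hcV, hc⟩, rfl⟩)
        ((hopen _ inter_subset_right (hW.inter hU)).mem_nhds ⟨y, ⟨hyW, hyU⟩, hyeq⟩)
    obtain ⟨_, ⟨⟨x, ⟨hxV, hxU⟩, rfl⟩, ⟨x', ⟨hx'W, hx'U⟩, hxx'⟩⟩, hxc⟩ :=
      Filter.nonempty_of_mem (sdiff_mem_nhdsWithin_compl hnhds {H c})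
    have hx'c : H x' ≠ H c := hxx' ▸ hxc
    refine hVW.ne_of_mem hxV hx'W (hinj ⟨hxU, ?_⟩ ⟨hx'U, ?_⟩ hxx'.symm)
    · rintro rfl; exact hxc rfl
    · rintro rfl; exact hx'c rfl
  intro x hx y hy hxy
  rcases eq_or_ne x c with rfl | hxc
  · by_contra hyx
    exact hne y ⟨hy, Ne.symm hyx⟩ hxy.symm
  rcases eq_or_ne y c with rfl | hyc
  · exact absurd hxy (hne x ⟨hx, hxc⟩)
  exact hinj ⟨hx, hxc⟩ ⟨hy, hyc⟩ hxy

theorem le_mul_norm_of_ball_subset_image_punctured_disk {g : ℂ → ℂ} {c : ℂ} {a b : ℝ}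
    (hc : c ∈ ball (0 : ℂ) 1) (hc0 : c ≠ 0) (hg : DifferentiableOn ℂ g (ball 0 1 \ {c}))
    (hinj : InjOn g (ball 0 1 \ {c})) (hg0 : g 0 = 0)
    (hball : ball 0 a ⊆ g '' (ball 0 1 \ {c})) (himg : g '' (ball 0 1 \ {c}) ⊆ ball 0 b) :
    a ≤ b * ‖c‖ := by
  set H := update g c (limUnder (𝓝[≠] c) g)
  have hc_nhds : ball (0 : ℂ) 1 ∈ 𝓝 c := isOpen_ball.mem_nhds hc
  have hgb : MapsTo g (ball 0 1 \ {c}) (ball 0 b) := fun _ hw ↦ himg (mem_image_of_mem g hw)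
  have hHg : EqOn H g (ball 0 1 \ {c}) := fun _ hw ↦ update_of_ne hw.2 _ _
  have hH : DifferentiableOn ℂ H (ball 0 1) :=
    differentiableOn_update_limUnder_of_bddAbove hc_nhds hg
      ⟨b, forall_mem_image.2 fun _ hw ↦ (mem_ball_zero_iff.1 (hgb hw)).le⟩
  have hHinj : InjOn H (ball 0 1) := hH.injOn_of_injOn_diff_singleton isOpen_ball
    (convex_ball 0 1).isPreconnected hc (hinj.congr hHg.symm)
  have hH0 : H 0 = 0 := (hHg ⟨mem_ball_self one_pos, hc0.symm⟩).trans hg0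
  have hHb : MapsTo H (ball 0 1) (closedBall (H 0) b) := by
    rw [hH0]
    refine (hH.continuousOn.continuousAt hc_nhds).mapsTo_of_mapsTo_diff_singleton hc_nhds
      isClosed_closedBall fun w hw ↦ ?_
    rw [hHg hw]
    exact ball_subset_closedBall (hgb hw)
  have hschwarz : ‖H c‖ ≤ b * ‖c‖ := by
    simpa [hH0] using dist_le_div_mul_dist_of_mapsTo_ball hH hHb hc
  have hHc : a ≤ ‖H c‖ := by
    by_contra! h
    obtain ⟨y, hy, hgy⟩ := hball (mem_ball_zero_iff.2 h)
    exact hy.2 (hHinj hy.1 hc ((hHg hy).trans hgy))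
  exact hHc.trans hschwarz

/-- The squeezing function of the punctured unit disk `𝔻 \ {0}` is `|z|`. -/
theorem squeezingFun_punctured_disk (z : ℂ)
    (hz : z ∈ ball (0 : ℂ) 1 \ {0}) :
    squeezingFun1 (ball (0 : ℂ) 1 \ {0}) z = ‖z‖ := by
  obtain ⟨hz1, hz0 : z ≠ 0⟩ := hz
  have hz1' : ‖z‖ < 1 := mem_ball_zero_iff.1 hz1
  have hφ := differentiableOn_diskMobius hz1'
  have hφinj := (bijOn_diskMobius hz1').injOn
  have himage : diskMobius z '' (ball 0 1 \ {0}) = ball 0 1 \ {z} := by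
    simpa using image_diskMobius_ball_diff_singleton hz1' (mem_ball_self one_pos)
  have hpreimage : diskMobius z '' (ball 0 1 \ {z}) = ball 0 1 \ {0} := by
    simpa using image_diskMobius_ball_diff_singleton hz1' hz1
  refine IsGreatest.csSup_eq ⟨⟨diskMobius z, ‖z‖, 1, norm_pos_iff.2 hz0, one_pos,
    hφ.mono sdiff_subset, hφinj.mono sdiff_subset, diskMobius_self z, ?_,
    himage ▸ sdiff_subset, (div_one _).symm⟩, ?_⟩
  · rw [himage]
    exact subset_sdiff_singleton (ball_subset_ball hz1'.le) fun h ↦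
      lt_irrefl _ (mem_ball_zero_iff.1 h)
  · rintro _ ⟨f, a, b, -, hb, hf, hinj, hfz, hball, himg, rfl⟩
    rw [div_le_iff₀ hb, mul_comm]
    have hmaps : MapsTo (diskMobius z) (ball 0 1 \ {z}) (ball 0 1 \ {0}) :=
      hpreimage ▸ mapsTo_image _ _
    refine le_mul_norm_of_ball_subset_image_punctured_disk (g := f ∘ diskMobius z) hz1 hz0
      (hf.comp (hφ.mono sdiff_subset) hmaps) (hinj.comp (hφinj.mono sdiff_subset) hmaps) (by simp [hfz]) ?_ ?_
    all_goals rwa [image_comp, hpreimage]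
end

section
/- Let 0 < r < 1, y ∈ A_r, and define f(z,y) = ω(z,y)/(|y| ω(z, 1/conj(y))) using the Schottky-Klein prime function ω of A_r. Then for every z with |z| = r, |f(z,y)| = |y|. That is, the conformal map f(·,y) of A_r onto a circularly slit disk sends the inner boundary circle to an arc of the circle of radius |y|. -/
noncomputable def skFactor (r : ℝ) (z y : ℂ) (n : ℕ) : ℂ :=
  ((z - (r : ℂ) ^ (2 * (n + 1)) * y) * (y - (r : ℂ) ^ (2 * (n + 1)) * z)) /
  ((z - (r : ℂ) ^ (2 * (n + 1)) * z) * (y - (r : ℂ) ^ (2 * (n + 1)) * y))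

noncomputable def skPrime (r : ℝ) (z y : ℂ) : ℂ :=
  (z - y) * ∏' n : ℕ, skFactor r z y n

def annulus (r : ℝ) : Set ℂ := {w : ℂ | r < ‖w‖ ∧ ‖w‖ < 1}

/-!
On the inner circle `z̄ = r²/z`, so `conj ω(z, y) = ω(r²/z, ȳ)`. Comparing the product
expansions factor by factor, the partial products of `ω(r²/u, v)` and `ω(u, 1/v)` differ by a
telescoping ratio, which yields the reflection identity `ω(r²/u, v) = v² ω(u, 1/v)`. Hence
`|ω(z, 1/ȳ)| = |ω(z, y)| / |y|²`, and `ω(z, y) ≠ 0` because the product converges absolutely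
with nonzero factors.
-/

open Filter Topology

theorem HasProd.mul_eq_mul_of_telescoping {M : Type*} [CommMonoid M] [TopologicalSpace M]
    [ContinuousMul M] [T2Space M] {f g c : ℕ → M} {a b l : M}
    (hf : HasProd f a) (hg : HasProd g b) (hc : Tendsto c atTop (𝓝 l))
    (h : ∀ n, f n * c (n + 1) = g n * c n) : a * l = b * c 0 := by
  have partial_eq : ∀ N, (∏ n ∈ Finset.range N, f n) * c N = (∏ n ∈ Finset.range N, g n) * c 0 := by
    intro N
    induction N with
    | zero => simp
    | succ N ih =>
      rw [Finset.prod_range_succ, Finset.prod_range_succ, mul_assoc, h, mul_left_comm, ih]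
      ac_rfl
  exact tendsto_nhds_unique ((hf.tendsto_prod_nat.mul hc).congr partial_eq)
    (hg.tendsto_prod_nat.mul_const _)

section

variable {r : ℝ} {z y : ℂ}

lemma norm_ofReal_pow_two_mul_succ (r : ℝ) (n : ℕ) :
    ‖(r : ℂ) ^ (2 * (n + 1))‖ = (r ^ 2) ^ (n + 1) := by
  rw [norm_pow, Complex.norm_real, Real.norm_eq_abs, pow_mul, sq_abs]

lemma norm_ofReal_pow_two_mul_succ_le (hr : |r| < 1) (n : ℕ) :
    ‖(r : ℂ) ^ (2 * (n + 1))‖ ≤ r ^ 2 := by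
  rw [norm_ofReal_pow_two_mul_succ]
  exact pow_le_of_le_one (sq_nonneg r) ((sq_lt_one_iff_abs_lt_one r).mpr hr).le n.succ_ne_zero

lemma sub_ofReal_pow_mul_ne_zero (hr : |r| < 1) (h : r ^ 2 * ‖y‖ < ‖z‖) (n : ℕ) :
    z - (r : ℂ) ^ (2 * (n + 1)) * y ≠ 0 := by
  refine sub_ne_zero.mpr (ne_of_apply_ne norm (ne_of_gt ?_))
  calc ‖(r : ℂ) ^ (2 * (n + 1)) * y‖ ≤ r ^ 2 * ‖y‖ := by
        rw [norm_mul]; gcongr; exact norm_ofReal_pow_two_mul_succ_le hr n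
    _ < ‖z‖ := h

lemma one_sub_ofReal_pow_ne_zero (hr : |r| < 1) (n : ℕ) :
    (1 : ℂ) - (r : ℂ) ^ (2 * (n + 1)) ≠ 0 := by
  simpa using sub_ofReal_pow_mul_ne_zero (z := 1) (y := 1) hr (by simpa using hr) n

lemma skFactor_eq (r : ℝ) (z y : ℂ) (n : ℕ) :
    skFactor r z y n = (z - (r : ℂ) ^ (2 * (n + 1)) * y) * (y - (r : ℂ) ^ (2 * (n + 1)) * z) /
      (z * y * (1 - (r : ℂ) ^ (2 * (n + 1))) ^ 2) := by
  rw [skFactor]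
  congr 1
  ring

lemma skFactor_sub_one (hr : |r| < 1) (hz : z ≠ 0) (hy : y ≠ 0) (n : ℕ) :
    skFactor r z y n - 1 =
      -((r : ℂ) ^ (2 * (n + 1)) * ((z - y) ^ 2 / (z * y)) / (1 - (r : ℂ) ^ (2 * (n + 1))) ^ 2) := by
  have hQ := one_sub_ofReal_pow_ne_zero hr n
  rw [skFactor_eq]
  field_simp
  ring

lemma summable_norm_skFactor_sub_one (hr : |r| < 1) (hz : z ≠ 0) (hy : y ≠ 0) :
    Summable fun n ↦ ‖skFactor r z y n - 1‖ := by
  have hρ1 : r ^ 2 < 1 := (sq_lt_one_iff_abs_lt_one r).mpr hr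
  set K := ‖(z - y) ^ 2 / (z * y)‖
  refine ((summable_geometric_of_lt_one (sq_nonneg r) hρ1).mul_left (K / (1 - r ^ 2) ^ 2)
    ).of_nonneg_of_le (fun _ ↦ norm_nonneg _) fun n ↦ ?_
  have h1Q : 1 - r ^ 2 ≤ ‖1 - (r : ℂ) ^ (2 * (n + 1))‖ := by
    have := norm_sub_norm_le (1 : ℂ) ((r : ℂ) ^ (2 * (n + 1)))
    rw [norm_one] at this
    linarith [norm_ofReal_pow_two_mul_succ_le hr n]
  rw [skFactor_sub_one hr hz hy, norm_neg, norm_div, norm_mul, norm_ofReal_pow_two_mul_succ,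
    norm_pow]
  calc (r ^ 2) ^ (n + 1) * K / ‖1 - (r : ℂ) ^ (2 * (n + 1))‖ ^ 2
      ≤ (r ^ 2) ^ (n + 1) * K / (1 - r ^ 2) ^ 2 := by gcongr
    _ ≤ (r ^ 2) ^ n * K / (1 - r ^ 2) ^ 2 := by
        gcongr ?_ * _ / _
        exact pow_le_pow_of_le_one (sq_nonneg r) hρ1.le n.le_succ
    _ = K / (1 - r ^ 2) ^ 2 * (r ^ 2) ^ n := by ring

lemma multipliable_skFactor (hr : |r| < 1) (hz : z ≠ 0) (hy : y ≠ 0) :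
    Multipliable (skFactor r z y) := by
  simpa using multipliable_one_add_of_summable (summable_norm_skFactor_sub_one hr hz hy)

lemma skFactor_ne_zero (hr : |r| < 1) (hz : z ≠ 0) (hy : y ≠ 0) (hzy : r ^ 2 * ‖y‖ < ‖z‖)
    (hyz : r ^ 2 * ‖z‖ < ‖y‖) (n : ℕ) : skFactor r z y n ≠ 0 := by
  have hρ1 : r ^ 2 < 1 := (sq_lt_one_iff_abs_lt_one r).mpr hr
  have hzz : r ^ 2 * ‖z‖ < ‖z‖ := mul_lt_of_lt_one_left (norm_pos_iff.mpr hz) hρ1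
  have hyy : r ^ 2 * ‖y‖ < ‖y‖ := mul_lt_of_lt_one_left (norm_pos_iff.mpr hy) hρ1
  exact div_ne_zero
    (mul_ne_zero (sub_ofReal_pow_mul_ne_zero hr hzy n) (sub_ofReal_pow_mul_ne_zero hr hyz n))
    (mul_ne_zero (sub_ofReal_pow_mul_ne_zero hr hzz n) (sub_ofReal_pow_mul_ne_zero hr hyy n))

lemma skPrime_ne_zero (hr : |r| < 1) (hz : z ≠ 0) (hy : y ≠ 0) (hne : z ≠ y)
    (hzy : r ^ 2 * ‖y‖ < ‖z‖) (hyz : r ^ 2 * ‖z‖ < ‖y‖) : skPrime r z y ≠ 0 := by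
  refine mul_ne_zero (sub_ne_zero.mpr hne) ?_
  simpa using tprod_one_add_ne_zero_of_summable (by simpa using skFactor_ne_zero hr hz hy hzy hyz)
    (summable_norm_skFactor_sub_one hr hz hy)

lemma conj_skPrime (r : ℝ) (z y : ℂ) :
    starRingEnd ℂ (skPrime r z y) = skPrime r (starRingEnd ℂ z) (starRingEnd ℂ y) := by
  rw [skPrime, skPrime, map_mul, map_sub,
    Function.LeftInverse.map_tprod _ Complex.continuous_conj Complex.continuous_conj
      Complex.conj_conj]
  simp [skFactor]

/-- With `s = u v`, `a n = 1 - r^(2n) s` and `b n = s - r^(2(n+1))`, the `n`-th factors of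
`ω(r²/u, v)` and `ω(u, 1/v)` are `a n * b (n+1) / D n` and `b n * a (n+1) / D n` for a common
`D n`, so the ratio `a n / b n` makes the two products telescope. -/
noncomputable def reflectRatio (r : ℝ) (s : ℂ) (n : ℕ) : ℂ :=
  (1 - (r : ℂ) ^ (2 * n) * s) / (s - (r : ℂ) ^ (2 * (n + 1)))

lemma tendsto_reflectRatio (hr : |r| < 1) {s : ℂ} (hs : s ≠ 0) :
    Tendsto (reflectRatio r s) atTop (𝓝 s⁻¹) := by
  have hq : ‖(r : ℂ) ^ 2‖ < 1 := by
    simpa [norm_pow] using (sq_lt_one_iff_abs_lt_one r).mpr hr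
  have hlim := tendsto_pow_atTop_nhds_zero_of_norm_lt_one hq
  have := ((tendsto_const_nhds (x := (1 : ℂ))).sub (hlim.mul_const s)).div
    (tendsto_const_nhds.sub (hlim.mul_const ((r : ℂ) ^ 2))) (by simpa using hs)
  rw [zero_mul, zero_mul, sub_zero, sub_zero, one_div] at this
  exact this.congr fun n ↦ by rw [Pi.div_apply, reflectRatio, pow_mul, pow_mul, pow_succ _ n]

variable {u v : ℂ}

lemma skFactor_reflect_mul_reflectRatio (hr0 : r ≠ 0) (hr : |r| < 1) (hu : u ≠ 0) (hv : v ≠ 0)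
    (huv : r ^ 2 < ‖u * v‖) (n : ℕ) :
    skFactor r ((r : ℂ) ^ 2 / u) v n * reflectRatio r (u * v) (n + 1) =
      skFactor r u v⁻¹ n * reflectRatio r (u * v) n := by
  have hb : ∀ k, u * v - (r : ℂ) ^ (2 * (k + 1)) ≠ 0 := fun k ↦ by
    simpa using sub_ofReal_pow_mul_ne_zero (y := 1) hr (by simpa using huv) k
  have h1 := hb n
  have h2 := hb (n + 1)
  have hQ := one_sub_ofReal_pow_ne_zero hr n
  have hr2 : (r : ℂ) ^ 2 ≠ 0 := pow_ne_zero 2 (Complex.ofReal_ne_zero.mpr hr0)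
  simp only [skFactor_eq, reflectRatio, pow_mul] at h1 h2 hQ ⊢
  generalize (r : ℂ) ^ 2 = t at h1 h2 hQ hr2 ⊢
  simp only [pow_succ t (n + 1), pow_succ t n] at h1 h2 hQ ⊢
  generalize t ^ n = P at h1 h2 hQ ⊢
  rw [div_mul_div_comm, div_mul_div_comm, div_eq_div_iff (by simp [*]) (by simp [*])]
  field_simp

lemma skPrime_reflect (hr0 : r ≠ 0) (hr : |r| < 1) (hu : u ≠ 0) (hv : v ≠ 0)
    (huv : r ^ 2 < ‖u * v‖) :
    skPrime r ((r : ℂ) ^ 2 / u) v = v ^ 2 * skPrime r u v⁻¹ := by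
  have hru : (r : ℂ) ^ 2 / u ≠ 0 := div_ne_zero (pow_ne_zero 2 (Complex.ofReal_ne_zero.mpr hr0)) hu
  have key := (multipliable_skFactor hr hru hv).hasProd.mul_eq_mul_of_telescoping
    (multipliable_skFactor hr hu (inv_ne_zero hv)).hasProd
    (tendsto_reflectRatio hr (mul_ne_zero hu hv))
    (skFactor_reflect_mul_reflectRatio hr0 hr hu hv huv)
  have hb : u * v - (r : ℂ) ^ 2 ≠ 0 := by
    simpa using sub_ofReal_pow_mul_ne_zero (y := 1) hr (by simpa using huv) 0
  simp only [reflectRatio, mul_zero, zero_add, pow_zero, one_mul, mul_one] at key hb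
  rw [skPrime, skPrime]
  generalize ∏' n, skFactor r ((r : ℂ) ^ 2 / u) v n = A at key
  generalize ∏' n, skFactor r u v⁻¹ n = B at key
  field_simp at key ⊢
  linear_combination -key

lemma conj_eq_sq_div_of_norm_eq (hz : ‖z‖ = r) (hz0 : z ≠ 0) :
    starRingEnd ℂ z = (r : ℂ) ^ 2 / z := by
  rw [eq_div_iff hz0, mul_comm, Complex.mul_conj', hz]

lemma skPrime_inv_conj_of_norm_eq (hr0 : 0 < r) (hr1 : r < 1) (hz : ‖z‖ = r) (hy : r < ‖y‖) :
    skPrime r z (starRingEnd ℂ y)⁻¹ = starRingEnd ℂ (skPrime r z y) / starRingEnd ℂ y ^ 2 := by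
  have hz0 : z ≠ 0 := norm_pos_iff.mp (hz ▸ hr0)
  have hy0 : starRingEnd ℂ y ≠ 0 := by simpa using norm_pos_iff.mp (hr0.trans hy)
  have hzy : r ^ 2 < ‖z * starRingEnd ℂ y‖ := by
    rw [norm_mul, Complex.norm_conj, hz, sq]
    exact mul_lt_mul_of_pos_left hy hr0
  rw [conj_skPrime, conj_eq_sq_div_of_norm_eq hz hz0,
    skPrime_reflect hr0.ne' (abs_lt.mpr ⟨by linarith, hr1⟩) hz0 hy0 hzy]
  field_simp

end

/-- Crowdy's conformal map `f(z,y) = ω(z,y)/(|y| ω(z, 1/conj y))` of `A_r` onto a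
circularly slit disk sends the inner boundary circle `|z| = r` to an arc of the
circle of radius `|y|`. -/
theorem crowdy_map_inner_circle (r : ℝ) (hr0 : 0 < r) (hr1 : r < 1)
    (y : ℂ) (hy : y ∈ annulus r) (z : ℂ) (hz : ‖z‖ = r) :
    ‖skPrime r z y /
      ((‖y‖ : ℂ) * skPrime r z ((starRingEnd ℂ) y)⁻¹)‖ = ‖y‖ := by
  obtain ⟨hry, hy1⟩ := hy
  have hz0 : z ≠ 0 := norm_pos_iff.mp (hz ▸ hr0)
  have hy0 : y ≠ 0 := norm_pos_iff.mp (hr0.trans hry)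
  have hω : skPrime r z y ≠ 0 :=
    skPrime_ne_zero (abs_lt.mpr ⟨by linarith, hr1⟩) hz0 hy0 (ne_of_apply_ne norm (by linarith))
      (by rw [hz]; nlinarith) (by rw [hz]; nlinarith)
  rw [skPrime_inv_conj_of_norm_eq hr0 hr1 hz hry, norm_div, norm_mul, norm_div, norm_pow,
    Complex.norm_conj, Complex.norm_conj, Complex.norm_real, Real.norm_of_nonneg (norm_nonneg y)]
  field_simp
end

section
/- Lower bound for the squeezing function of a product domain: if Ω = Ω₁ × ⋯ × Ωₙ ⊂ ℂⁿ with each Ωᵢ a bounded domain in ℂ, then for z = (z₁,…,zₙ) ∈ Ω, S_Ω(z) ≥ (S_{Ω₁}(z₁)^{−2} + ⋯ + S_{Ωₙ}(zₙ)^{−2})^{−1/2}. -/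
open Metric Set

noncomputable def squeezingFun (n : ℕ) (Ω : Set (EuclideanSpace ℂ (Fin n)))
    (z : EuclideanSpace ℂ (Fin n)) : ℝ :=
  sSup {t : ℝ | ∃ (f : EuclideanSpace ℂ (Fin n) → EuclideanSpace ℂ (Fin n)) (a b : ℝ),
    0 < a ∧ 0 < b ∧ DifferentiableOn ℂ f Ω ∧ Set.InjOn f Ω ∧ f z = 0 ∧
    ball (0 : EuclideanSpace ℂ (Fin n)) a ⊆ f '' Ω ∧
    f '' Ω ⊆ ball (0 : EuclideanSpace ℂ (Fin n)) b ∧ t = a / b}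

/-!
Rescale embeddings of the factors realising ratios `tᵢ` so that
`B(0;1) ⊆ fᵢ(Ωᵢ) ⊆ B(0;tᵢ⁻¹)`. The product map `w ↦ (fᵢ(wᵢ))ᵢ` is a holomorphic embedding of
`Ω` whose image contains the unit ball (every coordinate of a point of it lies in the unit disc)
and lies in the ball of radius `(∑ tᵢ⁻²)^{1/2}`, so `(∑ tᵢ⁻²)^{-1/2} ≤ S_Ω(z)`. Letting
`tᵢ → S_{Ωᵢ}(zᵢ)` gives the bound.
-/

section SqueezingRatios

open scoped Pointwise

variable {E : Type*} [NormedAddCommGroup E] [NormedSpace ℂ E]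

def squeezingRatios (Ω : Set E) (z : E) : Set ℝ :=
  {t : ℝ | ∃ (f : E → E) (a b : ℝ), 0 < a ∧ 0 < b ∧ DifferentiableOn ℂ f Ω ∧ InjOn f Ω ∧
    f z = 0 ∧ ball (0 : E) a ⊆ f '' Ω ∧ f '' Ω ⊆ ball (0 : E) b ∧ t = a / b}

theorem squeezingFun_eq_sSup (n : ℕ) (Ω : Set (EuclideanSpace ℂ (Fin n)))
    (z : EuclideanSpace ℂ (Fin n)) : squeezingFun n Ω z = sSup (squeezingRatios Ω z) :=
  rfl

theorem squeezingFun1_eq_sSup (Ω : Set ℂ) (z : ℂ) :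
    squeezingFun1 Ω z = sSup (squeezingRatios Ω z) :=
  rfl

variable {Ω : Set E} {z : E} {t : ℝ}

theorem pos_of_mem_squeezingRatios (ht : t ∈ squeezingRatios Ω z) : 0 < t := by
  obtain ⟨f, a, b, ha, hb, -, -, -, -, -, rfl⟩ := ht
  positivity

theorem le_of_ball_zero_subset_ball_zero [Nontrivial E] {a b : ℝ} (hb : 0 ≤ b)
    (h : ball (0 : E) a ⊆ ball 0 b) : a ≤ b := by
  by_contra! hba
  obtain ⟨x, hx⟩ := exists_norm_eq E hb
  exact (mem_ball_zero_iff.1 (h (mem_ball_zero_iff.2 (hx ▸ hba)))).ne hx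

theorem le_one_of_mem_squeezingRatios [Nontrivial E] (ht : t ∈ squeezingRatios Ω z) :
    t ≤ 1 := by
  obtain ⟨f, a, b, -, hb, -, -, -, hab, hfb, rfl⟩ := ht
  exact div_le_one_of_le₀ (le_of_ball_zero_subset_ball_zero hb.le (hab.trans hfb)) hb.le

theorem bddAbove_squeezingRatios [Nontrivial E] : BddAbove (squeezingRatios Ω z) :=
  ⟨1, fun _ => le_one_of_mem_squeezingRatios⟩

theorem squeezingFun_nonneg (n : ℕ) (Ω : Set (EuclideanSpace ℂ (Fin n)))
    (z : EuclideanSpace ℂ (Fin n)) : 0 ≤ squeezingFun n Ω z :=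
  squeezingFun_eq_sSup n Ω z ▸ Real.sSup_nonneg fun _ ht => (pos_of_mem_squeezingRatios ht).le

theorem squeezingRatios_nonempty (hΩ : IsOpen Ω) (hbdd : Bornology.IsBounded Ω) (hz : z ∈ Ω) :
    (squeezingRatios Ω z).Nonempty := by
  obtain ⟨a, ha, hza⟩ := Metric.isOpen_iff.1 hΩ z hz
  obtain ⟨b, hb, hzb⟩ := hbdd.subset_ball_lt 0 z
  refine ⟨a / b, (· - z), a, b, ha, hb, (differentiable_id.sub_const z).differentiableOn,
    fun x _ y _ h => sub_left_injective h, sub_self z, ?_, ?_, rfl⟩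
  · intro v hv
    exact ⟨v + z, hza (by simpa [dist_eq_norm] using hv), add_sub_cancel_right v z⟩
  · rintro _ ⟨w, hw, rfl⟩
    simpa [dist_eq_norm] using hzb hw

theorem exists_ball_one_subset_image_subset_ball_inv (ht : t ∈ squeezingRatios Ω z) :
    ∃ f : E → E, DifferentiableOn ℂ f Ω ∧ InjOn f Ω ∧ f z = 0 ∧
      ball (0 : E) 1 ⊆ f '' Ω ∧ f '' Ω ⊆ ball (0 : E) t⁻¹ := by
  obtain ⟨f, a, b, ha, hb, hf, hinj, hfz, hab, hfb, rfl⟩ := ht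
  set c : ℂ := (a : ℂ)⁻¹
  have hc : c ≠ 0 := inv_ne_zero (Complex.ofReal_ne_zero.2 ha.ne')
  have hc_norm : ‖c‖ = a⁻¹ := by simp [c, abs_of_pos ha]
  have himage : (fun w => c • f w) '' Ω = c • (f '' Ω) := by
    rw [← Set.image_smul, Set.image_image]
  refine ⟨fun w => c • f w, hf.const_smul c,
    fun x hx y hy h => hinj hx hy (smul_right_injective E hc h), by simp [hfz], ?_, ?_⟩
  · rw [himage]
    convert Set.smul_set_mono (a := c) hab using 1
    rw [_root_.smul_ball hc, smul_zero, hc_norm, inv_mul_cancel₀ ha.ne']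
  · rw [himage]
    convert Set.smul_set_mono (a := c) hfb using 1
    rw [_root_.smul_ball hc, smul_zero, hc_norm, inv_div, div_eq_inv_mul]

end SqueezingRatios

section ProductMap

variable {ι : Type*} [Fintype ι] {Ωs : ι → Set ℂ} {f : ι → ℂ → ℂ}

theorem ball_zero_subset_image_pi {r : ℝ} (hf : ∀ i, ball (0 : ℂ) r ⊆ f i '' Ωs i) :
    ball (0 : EuclideanSpace ℂ ι) r ⊆
      (fun w => WithLp.toLp 2 fun i => f i (w i)) ''
        {w : EuclideanSpace ℂ ι | ∀ i, w i ∈ Ωs i} := by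
  intro v hv
  have hv_coord i : v i ∈ f i '' Ωs i :=
    hf i (mem_ball_zero_iff.2 ((PiLp.norm_apply_le v i).trans_lt (mem_ball_zero_iff.1 hv)))
  choose w hw hfw using hv_coord
  exact ⟨WithLp.toLp 2 w, hw, PiLp.ext hfw⟩

theorem image_pi_subset_ball_zero [Nonempty ι] {r : ι → ℝ}
    (hf : ∀ i, f i '' Ωs i ⊆ ball (0 : ℂ) (r i)) :
    (fun w => WithLp.toLp 2 fun i => f i (w i)) '' {w : EuclideanSpace ℂ ι | ∀ i, w i ∈ Ωs i} ⊆
      ball 0 √(∑ i, r i ^ 2) := by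
  rintro _ ⟨w, hw, rfl⟩
  have hlt i : ‖f i (w i)‖ < r i := mem_ball_zero_iff.1 (hf i ⟨w i, hw i, rfl⟩)
  rw [mem_ball_zero_iff, Real.lt_sqrt (norm_nonneg _), EuclideanSpace.norm_sq_eq]
  exact Finset.sum_lt_sum_of_nonempty Finset.univ_nonempty fun i _ =>
    pow_lt_pow_left₀ (hlt i) (norm_nonneg _) two_ne_zero

theorem inv_sqrt_sum_inv_sq_mem_squeezingRatios_pi [Nonempty ι] (z : EuclideanSpace ℂ ι)
    {t : ι → ℝ} (ht : ∀ i, t i ∈ squeezingRatios (Ωs i) (z i)) :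
    (√(∑ i, (t i)⁻¹ ^ 2))⁻¹ ∈ squeezingRatios {w : EuclideanSpace ℂ ι | ∀ i, w i ∈ Ωs i} z := by
  choose f hf hinj hfz hball hsub using fun i => exists_ball_one_subset_image_subset_ball_inv (ht i)
  have ht_pos i : 0 < t i := pos_of_mem_squeezingRatios (ht i)
  refine ⟨fun w => WithLp.toLp 2 fun i => f i (w i), 1, √(∑ i, (t i)⁻¹ ^ 2), one_pos,
    Real.sqrt_pos.2 (Finset.sum_pos (fun i _ => by have := ht_pos i; positivity)
      Finset.univ_nonempty), ?_, ?_, PiLp.ext hfz, ball_zero_subset_image_pi hball,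
    image_pi_subset_ball_zero hsub, (one_div _).symm⟩
  · exact differentiableOn_euclidean.2 fun i =>
      (hf i).comp (differentiableOn_euclidean.1 differentiableOn_id i) fun w hw => hw i
  · exact fun w hw w' hw' h => PiLp.ext fun i =>
      hinj i (hw i) (hw' i) (congrArg (fun v : EuclideanSpace ℂ ι => v i) h)

end ProductMap

theorem inv_sqrt_sum_inv_sq_sSup_le {ι : Type*} [Fintype ι] [Nonempty ι] {S : ι → Set ℝ}
    (hne : ∀ i, (S i).Nonempty) (hbdd : ∀ i, BddAbove (S i)) (hpos : ∀ i, 0 < sSup (S i))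
    {M : ℝ} (hM : ∀ t : ι → ℝ, (∀ i, t i ∈ S i) → (√(∑ i, (t i)⁻¹ ^ 2))⁻¹ ≤ M) :
    (√(∑ i, (sSup (S i))⁻¹ ^ 2))⁻¹ ≤ M := by
  choose u _ hu huS using fun i => exists_seq_tendsto_sSup (hne i) (hbdd i)
  have hsum_pos : 0 < ∑ i, (sSup (S i))⁻¹ ^ 2 :=
    Finset.sum_pos (fun i _ => by have := hpos i; positivity) Finset.univ_nonempty
  have hlim : Filter.Tendsto (fun k => (√(∑ i, (u i k)⁻¹ ^ 2))⁻¹) Filter.atTop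
      (nhds (√(∑ i, (sSup (S i))⁻¹ ^ 2))⁻¹) :=
    ((tendsto_finsetSum _ fun i _ => ((hu i).inv₀ (hpos i).ne').pow 2).sqrt).inv₀
      (Real.sqrt_pos.2 hsum_pos).ne'
  exact le_of_tendsto' hlim fun k => hM _ fun i => huS i k

theorem squeezingFun_product_lower_bound_general (n : ℕ) (Ωs : Fin n → Set ℂ)
    (hopen : ∀ i, IsOpen (Ωs i))
    (hbdd : ∀ i, Bornology.IsBounded (Ωs i))
    (z : EuclideanSpace ℂ (Fin n)) (hz : ∀ i, z i ∈ Ωs i) :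
    (Real.sqrt (∑ i, (squeezingFun1 (Ωs i) (z i))⁻¹ ^ 2))⁻¹ ≤
      squeezingFun n {w : EuclideanSpace ℂ (Fin n) | ∀ i, w i ∈ Ωs i} z := by
  rcases isEmpty_or_nonempty (Fin n) with hn | hn
  · simpa using squeezingFun_nonneg n _ z
  rw [squeezingFun_eq_sSup]
  simp only [squeezingFun1_eq_sSup]
  have hne i := squeezingRatios_nonempty (hopen i) (hbdd i) (hz i)
  refine inv_sqrt_sum_inv_sq_sSup_le hne (fun i => bddAbove_squeezingRatios)
    (fun i => ?_) fun t ht => ?_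
  · obtain ⟨t, ht⟩ := hne i
    exact (pos_of_mem_squeezingRatios ht).trans_le (le_csSup bddAbove_squeezingRatios ht)
  · exact le_csSup bddAbove_squeezingRatios (inv_sqrt_sum_inv_sq_mem_squeezingRatios_pi z ht)

/-- Lower bound for the squeezing function of a product domain:
`S_Ω(z) ≥ (S_{Ω₁}(z₁)^{-2} + ⋯ + S_{Ωₙ}(zₙ)^{-2})^{-1/2}`. -/
theorem squeezingFun_product_lower_bound (n : ℕ) (Ωs : Fin n → Set ℂ)
    (hopen : ∀ i, IsOpen (Ωs i)) (hconn : ∀ i, IsConnected (Ωs i))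
    (hbdd : ∀ i, Bornology.IsBounded (Ωs i))
    (z : EuclideanSpace ℂ (Fin n)) (hz : ∀ i, z i ∈ Ωs i) :
    (Real.sqrt (∑ i, (squeezingFun1 (Ωs i) (z i))⁻¹ ^ 2))⁻¹ ≤
      squeezingFun n {w : EuclideanSpace ℂ (Fin n) | ∀ i, w i ∈ Ωs i} z :=
  squeezingFun_product_lower_bound_general n Ωs hopen hbdd z hz
end
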